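/- arXiv:1509.02378 — 4 statements merged into one kernel-verified Lean document; each statement's English description precedes it below -/
import Mathlib

section
/- Let A, B, C be 2×2 complex matrices of the form A = [[1+a₁a₂, a₂²],[-a₁², 1-a₁a₂]], B = [[1+b₁b₂, b₂²],[-b₁², 1-b₁b₂]], C = [[1+c₁c₂, c₂²],[-c₁², 1-c₁c₂]], and let p = (p₁,p₂), s = (s₁,s₂) be row vectors in ℂ². Then det(p, sABC)·det(p, sB) - det(p, sBC)·det(p, sAB) = -(c₂p₁ - c₁p₂)²·(a₂s₁ - a₁s₂)² = det(p, s)·det(p, sAC) - det(p, sC)·det(p, sA). -/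
open Matrix

/-- det of the 2×2 matrix with rows `v`, `w`. -/
def det2 (v w : Fin 2 → ℂ) : ℂ := v 0 * w 1 - v 1 * w 0

theorem stmt1 (a₁ a₂ b₁ b₂ c₁ c₂ : ℂ)
    (A B C : Matrix (Fin 2) (Fin 2) ℂ)
    (hA : A = !![1 + a₁*a₂, a₂^2; -a₁^2, 1 - a₁*a₂])
    (hB : B = !![1 + b₁*b₂, b₂^2; -b₁^2, 1 - b₁*b₂])
    (hC : C = !![1 + c₁*c₂, c₂^2; -c₁^2, 1 - c₁*c₂])
    (p s : Fin 2 → ℂ) (p₁ p₂ s₁ s₂ : ℂ)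
    (hp : p = ![p₁, p₂]) (hs : s = ![s₁, s₂]) :
    det2 p (vecMul s (A * B * C)) * det2 p (vecMul s B)
      - det2 p (vecMul s (B * C)) * det2 p (vecMul s (A * B))
      = -(c₂ * p₁ - c₁ * p₂)^2 * (a₂ * s₁ - a₁ * s₂)^2 ∧
    -(c₂ * p₁ - c₁ * p₂)^2 * (a₂ * s₁ - a₁ * s₂)^2
      = det2 p s * det2 p (vecMul s (A * C))
        - det2 p (vecMul s C) * det2 p (vecMul s A) := by
  subst hA hB hC hp hs
  constructor <;>
  · simp [det2, vecMul, Matrix.mul_apply, Fin.sum_univ_two, dotProduct,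
      Fin.sum_univ_succ]
    ring
end

section
/- Define the operation * on ℂ²∖{0} by (α,β) * (γ,δ) = (α,β)·[[1+γδ, δ²],[-γ², 1-γδ]] (row vector times matrix). Then for all a, b, c ∈ ℂ²∖{0}: (i) a * a = a; (ii) the map x ↦ x * b is a bijection of ℂ²∖{0}; (iii) (a*b)*c = (a*c)*(b*c). That is, (ℂ²∖{0}, *) is a quandle. -/
/-- The quandle operation: row vector `s` times the parabolic matrix of `a`. -/
def star (s a : ℂ × ℂ) : ℂ × ℂ :=
  (s.1 * (1 + a.1 * a.2) - s.2 * a.1^2, s.1 * a.2^2 + s.2 * (1 - a.1 * a.2))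

/-- Inverse of `fun s => star s a`. -/
def unstar (s a : ℂ × ℂ) : ℂ × ℂ :=
  (s.1 * (1 - a.1 * a.2) + s.2 * a.1^2, -s.1 * a.2^2 + s.2 * (1 + a.1 * a.2))

lemma unstar_star (s a : ℂ × ℂ) : unstar (star s a) a = s := by
  simp only [_root_.star, unstar, Prod.ext_iff]
  constructor <;> ring

lemma star_unstar (s a : ℂ × ℂ) : star (unstar s a) a = s := by
  simp only [_root_.star, unstar, Prod.ext_iff]
  constructor <;> ring

lemma starNeZero {s : ℂ × ℂ} (a : ℂ × ℂ) (hs : s ≠ 0) : star s a ≠ 0 := by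
  intro h
  apply hs
  have := unstar_star s a
  rw [h] at this
  simpa [unstar, Prod.ext_iff] using this.symm

lemma unstar_ne_zero {s : ℂ × ℂ} (a : ℂ × ℂ) (hs : s ≠ 0) : unstar s a ≠ 0 := by
  intro h
  apply hs
  have := star_unstar s a
  rw [h] at this
  simpa [_root_.star, Prod.ext_iff] using this.symm

theorem stmt2 :
    (∀ a : ℂ × ℂ, a ≠ 0 → star a a = a) ∧
    (∀ b : ℂ × ℂ, b ≠ 0 →
      Set.BijOn (fun x => star x b) {x : ℂ × ℂ | x ≠ 0} {x : ℂ × ℂ | x ≠ 0}) ∧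
    (∀ a b c : ℂ × ℂ, a ≠ 0 → b ≠ 0 → c ≠ 0 →
      star (star a b) c = star (star a c) (star b c)) := by
  refine ⟨?_, ?_, ?_⟩
  · intro a _
    simp only [_root_.star, Prod.ext_iff]
    constructor <;> ring
  · intro b _
    refine ⟨fun x hx => starNeZero b hx, ?_, ?_⟩
    · intro x _ y _ hxy
      have := congrArg (fun z => unstar z b) hxy
      simpa only [unstar_star] using this
    · intro y hy
      exact ⟨unstar y b, unstar_ne_zero b hy, star_unstar y b⟩
  · intro a b c _ _ _
    simp only [_root_.star, Prod.ext_iff]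
    constructor <;> ring
end

section
/- Let s, a ∈ ℂ²∖{0} with a = (α,β), and suppose h(s*a) = h(s) (where both sides are finite, i.e. the second coordinates involved are nonzero). Then h(s) is a fixed point of the Möbius transformation â(z) = ((1+αβ)z - α²)/(β²z + (1-αβ)), and hence h(a) = h(s). -/
theorem stmt7 (s : ℂ × ℂ) (α β : ℂ) (hβ : β ≠ 0)
    (hs2 : s.2 ≠ 0) (hsa2 : (star s (α, β)).2 ≠ 0)
    (h : (star s (α, β)).1 / (star s (α, β)).2 = s.1 / s.2) :
    ((1 + α * β) * (s.1 / s.2) - α^2) / (β^2 * (s.1 / s.2) + (1 - α * β))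
        = s.1 / s.2 ∧
      α / β = s.1 / s.2 := by
  unfold _root_.star at h hsa2
  simp only at h hsa2
  have h' : (s.1 * (1 + α * β) - s.2 * α ^ 2) * s.2
      = s.1 * (s.1 * β ^ 2 + s.2 * (1 - α * β)) :=
    (div_eq_div_iff hsa2 hs2).mp h
  have key : (β * s.1 - α * s.2) ^ 2 = 0 := by linear_combination -h'
  have hz : β * s.1 = α * s.2 := by
    have := pow_eq_zero_iff (n := 2) (by norm_num) |>.mp key
    linear_combination this
  have h2 : α / β = s.1 / s.2 := by
    rw [div_eq_div_iff hβ hs2]; linear_combination -hz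
  refine ⟨?_, h2⟩
  rw [← h2]
  have hden : β ^ 2 * (α / β) + (1 - α * β) = 1 := by field_simp; ring
  rw [hden, div_one]
  field_simp
  ring
end

section
/- Let A, B, C be parabolic-type matrices (trace 2, determinant 1, of the form [[1+xy, y²],[-x², 1-xy]]) and p, s ∈ ℂ² row vectors. Define w_a = det(p,s), w_b = det(p,sC), w_c = det(p,sBC), w_d = det(p,sABC), w_e = det(p,sAB), w_f = det(p,sA), w_g = det(p,sB), w_h = det(p,sAC). Then w_d·w_g - w_c·w_e = w_a·w_h - w_b·w_f. -/
open Matrix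

set_option maxHeartbeats 2000000 in
theorem stmt14 (x₁ x₂ y₁ y₂ z₁ z₂ : ℂ)
    (A B C : Matrix (Fin 2) (Fin 2) ℂ)
    (hA : A = !![1 + x₁*x₂, x₂^2; -x₁^2, 1 - x₁*x₂])
    (hB : B = !![1 + y₁*y₂, y₂^2; -y₁^2, 1 - y₁*y₂])
    (hC : C = !![1 + z₁*z₂, z₂^2; -z₁^2, 1 - z₁*z₂])
    (p s : Fin 2 → ℂ)
    (wa wb wc wd we wf wg wh : ℂ)
    (hwa : wa = det2 p s)
    (hwb : wb = det2 p (vecMul s C))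
    (hwc : wc = det2 p (vecMul s (B * C)))
    (hwd : wd = det2 p (vecMul s (A * B * C)))
    (hwe : we = det2 p (vecMul s (A * B)))
    (hwf : wf = det2 p (vecMul s A))
    (hwg : wg = det2 p (vecMul s B))
    (hwh : wh = det2 p (vecMul s (A * C))) :
    wd * wg - wc * we = wa * wh - wb * wf := by
  subst hA hB hC hwa hwb hwc hwd hwe hwf hwg hwh
  simp only [det2, vecMul, Matrix.mul_apply, dotProduct, Fin.sum_univ_two,
    Matrix.cons_val', Matrix.cons_val_zero, Matrix.cons_val_one, Matrix.head_cons,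
    Matrix.empty_val', Matrix.cons_val_fin_one, Matrix.head_fin_const, Matrix.of_apply]
  ring
end
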